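/- arXiv:2508.08075 — 11 statements merged into one kernel-verified Lean document; each statement's English description precedes it below -/
import Mathlib

section
/- Let m1 and m2 be mass functions on frames Θ1 and Θ2 respectively, such that the essential conflict set Υ(m1,m2) is nonempty (the open-world criterion) and the conflict coefficient satisfies k(m1,m2) < 1, so that the Dempster combination m1 ⊕ m2 is defined. Then there exists ω ∈ Θ1 ∪ Θ2 such that Pl_{m1}({ω}) > 0 or Pl_{m2}({ω}) > 0, but Pl_{m1⊕m2}({ω}) = 0. (Plausibility Absolutization.) -/
open Finset
open scoped Classical

variable {X : Type*} [Fintype X] [DecidableEq X]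

/-- A mass function on a frame `Θ` (a finite subset of `X`). -/
def IsMass (Θ : Finset X) (m : Finset X → ℝ) : Prop :=
  (∀ A, 0 ≤ m A) ∧ m ∅ = 0 ∧ (∀ A, ¬ A ⊆ Θ → m A = 0) ∧
    ∑ A ∈ Θ.powerset, m A = 1

/-- A focal element of a mass function. -/
def Focal (m : Finset X → ℝ) (A : Finset X) : Prop := 0 < m A

/-- Plausibility. -/
noncomputable def Pl (m : Finset X → ℝ) (A : Finset X) : ℝ :=
  ∑ B ∈ univ.filter (fun B : Finset X => (B ∩ A).Nonempty), m B

/-- Belief. -/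
noncomputable def Bel (m : Finset X → ℝ) (A : Finset X) : ℝ :=
  ∑ B ∈ univ.filter (fun B : Finset X => B ≠ ∅ ∧ B ⊆ A), m B

/-- Conflict coefficient. -/
noncomputable def conflictK (m1 m2 : Finset X → ℝ) : ℝ :=
  ∑ p ∈ univ.filter (fun p : Finset X × Finset X => p.1 ∩ p.2 = ∅),
    m1 p.1 * m2 p.2

/-- Dempster's combination rule. -/
noncomputable def dempster (m1 m2 : Finset X → ℝ) (C : Finset X) : ℝ :=
  if C = ∅ then 0
  else (∑ p ∈ univ.filter (fun p : Finset X × Finset X => p.1 ∩ p.2 = C),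
          m1 p.1 * m2 p.2) / (1 - conflictK m1 m2)

/-- The essential conflict set `Υ(m1, m2)`. -/
noncomputable def essConflict (Θ1 Θ2 : Finset X) (m1 m2 : Finset X → ℝ) : Finset X :=
  (Θ1 ∪ Θ2).filter (fun ω =>
    (∃ A, Focal m1 A ∧ ω ∈ A ∧ ∀ B, Focal m2 B → A ∩ B = ∅) ∨
    (∃ A, Focal m2 A ∧ ω ∈ A ∧ ∀ B, Focal m1 B → A ∩ B = ∅))

/-- The effective frame `Θ*`: the union of the focal elements. -/
noncomputable def effFrame (m : Finset X → ℝ) : Finset X :=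
  univ.filter (fun ω => ∃ A, Focal m A ∧ ω ∈ A)

/-- The FNBT transform of `m` on an extended frame `Ω ⊇ Θ*`:
`m'(B) = Σ_{A ⊆ Θ*, A ∪ (Ω \ Θ*) = B} m(A)`, i.e. `m'(A ∪ (Ω \ Θ*)) = m(A)`
for focal `A` and `m'(B) = 0` otherwise. -/
noncomputable def fnbt (m : Finset X → ℝ) (Ω : Finset X) (B : Finset X) : ℝ :=
  ∑ A ∈ (effFrame m).powerset.filter (fun A => A ∪ (Ω \ effFrame m) = B), m A

/-- Plausibility Absolutization. -/
theorem plausibility_absolutization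
    (Θ1 Θ2 : Finset X) (m1 m2 : Finset X → ℝ)
    (h1 : IsMass Θ1 m1) (h2 : IsMass Θ2 m2)
    (hopen : (essConflict Θ1 Θ2 m1 m2).Nonempty)
    (hk : conflictK m1 m2 < 1) :
    ∃ ω ∈ Θ1 ∪ Θ2,
      (0 < Pl m1 {ω} ∨ 0 < Pl m2 {ω}) ∧ Pl (dempster m1 m2) {ω} = 0 := by
  obtain ⟨ω, hω⟩ := hopen
  rw [essConflict, mem_filter] at hω
  obtain ⟨hωΘ, hcase⟩ := hω
  have hkey : ∀ P Q : Finset X, m1 P * m2 Q ≠ 0 → ω ∉ P ∩ Q := by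
    intro P Q hPQ hmem
    rw [mem_inter] at hmem
    have hP : m1 P ≠ 0 := fun h => hPQ (by rw [h, zero_mul])
    have hQ : m2 Q ≠ 0 := fun h => hPQ (by rw [h, mul_zero])
    have hfP : Focal m1 P := lt_of_le_of_ne (h1.1 P) (Ne.symm hP)
    have hfQ : Focal m2 Q := lt_of_le_of_ne (h2.1 Q) (Ne.symm hQ)
    rcases hcase with ⟨A, hA, hωA, hdis⟩ | ⟨A, hA, hωA, hdis⟩
    · have := hdis Q hfQ
      exact (eq_empty_iff_forall_notMem.mp this ω) (mem_inter.mpr ⟨hωA, hmem.2⟩)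
    · have := hdis P hfP
      exact (eq_empty_iff_forall_notMem.mp this ω) (mem_inter.mpr ⟨hωA, hmem.1⟩)
  have hpos : 0 < Pl m1 {ω} ∨ 0 < Pl m2 {ω} := by
    rcases hcase with ⟨A, hA, hωA, _⟩ | ⟨A, hA, hωA, _⟩
    · left
      refine Finset.sum_pos' (fun B _ => h1.1 B) ⟨A, ?_, hA⟩
      simp only [mem_filter, mem_univ, true_and]
      exact ⟨ω, mem_inter.mpr ⟨hωA, mem_singleton_self ω⟩⟩
    · right
      refine Finset.sum_pos' (fun B _ => h2.1 B) ⟨A, ?_, hA⟩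
      simp only [mem_filter, mem_univ, true_and]
      exact ⟨ω, mem_inter.mpr ⟨hωA, mem_singleton_self ω⟩⟩
  refine ⟨ω, hωΘ, hpos, ?_⟩
  rw [Pl]
  apply Finset.sum_eq_zero
  intro B hB
  simp only [mem_filter, mem_univ, true_and] at hB
  obtain ⟨x, hx⟩ := hB
  rw [mem_inter, mem_singleton] at hx
  obtain ⟨hxB, rfl⟩ := hx
  rw [dempster]
  have hBne : B ≠ ∅ := fun h => by simp [h] at hxB
  rw [if_neg hBne]
  have : (∑ p ∈ univ.filter (fun p : Finset X × Finset X => p.1 ∩ p.2 = B),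
      m1 p.1 * m2 p.2) = 0 := by
    apply Finset.sum_eq_zero
    intro p hp
    simp only [mem_filter, mem_univ, true_and] at hp
    by_contra h
    exact hkey p.1 p.2 h (hp ▸ hxB)
  rw [this, zero_div]
end

section
/- Let m1 and m2 be mass functions on frames Θ1 and Θ2 with conflict coefficient k(m1,m2) < 1, and let ω ∈ Υ(m1,m2) be any essential conflict element. Then Pl_{m1⊕m2}({ω}) = 0; that is, every essential conflict element becomes completely implausible after Dempster combination. -/
open Finset
open scoped Classical

variable {X : Type*} [Fintype X] [DecidableEq X]

/-- every essential conflict element becomes completely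
implausible after Dempster combination. -/
theorem ess_conflict_implausible_after_combination
    (Θ1 Θ2 : Finset X) (m1 m2 : Finset X → ℝ)
    (h1 : IsMass Θ1 m1) (h2 : IsMass Θ2 m2)
    (hk : conflictK m1 m2 < 1)
    (ω : X) (hω : ω ∈ essConflict Θ1 Θ2 m1 m2) :
    Pl (dempster m1 m2) {ω} = 0 := by
  unfold Pl
  apply Finset.sum_eq_zero
  intro B hB
  simp only [mem_filter, mem_univ, true_and] at hB
  have hωB : ω ∈ B := by
    obtain ⟨x, hx⟩ := hB
    simp only [mem_inter, mem_singleton] at hx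
    exact hx.2 ▸ hx.1
  unfold dempster
  rcases eq_or_ne B ∅ with h | h
  · simp [h]
  · rw [if_neg h]
    apply div_eq_zero_iff.mpr
    left
    apply Finset.sum_eq_zero
    intro p hp
    simp only [mem_filter, mem_univ, true_and] at hp
    have hω1 : ω ∈ p.1 := (mem_inter.mp (hp ▸ hωB)).1
    have hω2 : ω ∈ p.2 := (mem_inter.mp (hp ▸ hωB)).2
    by_contra hne
    have hf1 : Focal m1 p.1 := lt_of_le_of_ne (h1.1 p.1) (by
      intro hz; exact hne (by rw [← hz]; ring))
    have hf2 : Focal m2 p.2 := lt_of_le_of_ne (h2.1 p.2) (by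
      intro hz; exact hne (by rw [← hz]; ring))
    simp only [essConflict, mem_filter] at hω
    rcases hω.2 with ⟨A, hA, hωA, hdis⟩ | ⟨A, hA, hωA, hdis⟩
    · have := hdis p.2 hf2
      have : ω ∈ A ∩ p.2 := mem_inter.mpr ⟨hωA, hω2⟩
      simp [hdis p.2 hf2] at this
    · have : ω ∈ A ∩ p.1 := mem_inter.mpr ⟨hωA, hω1⟩
      simp [hdis p.1 hf1] at this
end

section
/- Let m1 and m2 be mass functions on frames Θ1 and Θ2 such that Υ(m1,m2) ≠ ∅ and k(m1,m2) < 1. Then there exists ω ∈ Θ1 ∪ Θ2 such that Pl_{m1}({ω}) > 0 or Pl_{m2}({ω}) > 0, while Pl_{m1⊕m2}({ω}) = 0 and Bel_{m1⊕m2}((Θ1 ∪ Θ2) \ {ω}) = 1; i.e., Dempster combination renders the hypothesis ω entirely impossible and its complement necessarily true. (Belief Absolutization.) -/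
open Finset
open scoped Classical

variable {X : Type*} [Fintype X] [DecidableEq X]

/-- Belief Absolutization. -/
theorem belief_absolutization
    (Θ1 Θ2 : Finset X) (m1 m2 : Finset X → ℝ)
    (h1 : IsMass Θ1 m1) (h2 : IsMass Θ2 m2)
    (hopen : (essConflict Θ1 Θ2 m1 m2).Nonempty)
    (hk : conflictK m1 m2 < 1) :
    ∃ ω ∈ Θ1 ∪ Θ2,
      (0 < Pl m1 {ω} ∨ 0 < Pl m2 {ω}) ∧
      Pl (dempster m1 m2) {ω} = 0 ∧
      Bel (dempster m1 m2) ((Θ1 ∪ Θ2) \ {ω}) = 1 := by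
  classical
  obtain ⟨ω, hω⟩ := hopen
  rw [essConflict, mem_filter] at hω
  obtain ⟨hωmem, hcase⟩ := hω
  -- positivity of one of the plausibilities
  have hpos : 0 < Pl m1 {ω} ∨ 0 < Pl m2 {ω} := by
    rcases hcase with ⟨A, hA, hωA, _⟩ | ⟨A, hA, hωA, _⟩
    · left
      refine Finset.sum_pos' (fun B _ => h1.1 B) ⟨A, ?_, hA⟩
      simp only [mem_filter, mem_univ, true_and]
      exact ⟨ω, by simp [hωA]⟩
    · right
      refine Finset.sum_pos' (fun B _ => h2.1 B) ⟨A, ?_, hA⟩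
      simp only [mem_filter, mem_univ, true_and]
      exact ⟨ω, by simp [hωA]⟩
  -- key: ω is in no intersection of focal elements
  have hkey : ∀ A B : Finset X, 0 < m1 A → 0 < m2 B → ω ∉ A ∩ B := by
    rcases hcase with ⟨A, hA, hωA, hd⟩ | ⟨A, hA, hωA, hd⟩
    · intro A' B' _ hB' hmem
      have hAB := hd B' hB'
      have hωB' : ω ∈ B' := (mem_inter.mp hmem).2
      have : ω ∈ A ∩ B' := mem_inter.mpr ⟨hωA, hωB'⟩
      rw [hAB] at this; exact absurd this (notMem_empty ω)
    · intro A' B' hA' _ hmem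
      have hAB := hd A' hA'
      have hωA' : ω ∈ A' := (mem_inter.mp hmem).1
      have : ω ∈ A ∩ A' := mem_inter.mpr ⟨hωA, hωA'⟩
      rw [hAB] at this; exact absurd this (notMem_empty ω)
  set num : Finset X → ℝ := fun C =>
    ∑ p ∈ univ.filter (fun p : Finset X × Finset X => p.1 ∩ p.2 = C),
      m1 p.1 * m2 p.2 with hnum
  have hprodpos : ∀ p : Finset X × Finset X, m1 p.1 * m2 p.2 ≠ 0 →
      0 < m1 p.1 ∧ 0 < m2 p.2 := by
    intro p hp
    constructor
    · rcases lt_or_eq_of_le (h1.1 p.1) with h | h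
      · exact h
      · exact absurd (by rw [← h, zero_mul]) hp
    · rcases lt_or_eq_of_le (h2.1 p.2) with h | h
      · exact h
      · exact absurd (by rw [← h, mul_zero]) hp
  -- numerator vanishes on sets containing ω
  have hnumzero : ∀ C : Finset X, ω ∈ C → num C = 0 := by
    intro C hωC
    refine Finset.sum_eq_zero fun p hp => ?_
    by_contra hne
    obtain ⟨h1p, h2p⟩ := hprodpos p hne
    have hC : p.1 ∩ p.2 = C := (mem_filter.mp hp).2
    exact hkey p.1 p.2 h1p h2p (by rw [hC]; exact hωC)
  have hdzero : ∀ C : Finset X, ω ∈ C → dempster m1 m2 C = 0 := by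
    intro C hωC
    rw [dempster]
    split
    · rfl
    · rw [show (∑ p ∈ univ.filter
        (fun p : Finset X × Finset X => p.1 ∩ p.2 = C), m1 p.1 * m2 p.2)
        = num C from rfl, hnumzero C hωC, zero_div]
  have hk' : (1 : ℝ) - conflictK m1 m2 ≠ 0 := by linarith
  -- total mass of each m is 1 over univ
  have hsum1 : ∑ A ∈ (univ : Finset (Finset X)), m1 A = 1 := by
    rw [← h1.2.2.2]
    refine (Finset.sum_subset (subset_univ _) fun A _ hA => ?_).symm
    exact h1.2.2.1 A (by simpa using hA)
  have hsum2 : ∑ A ∈ (univ : Finset (Finset X)), m2 A = 1 := by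
    rw [← h2.2.2.2]
    refine (Finset.sum_subset (subset_univ _) fun A _ hA => ?_).symm
    exact h2.2.2.1 A (by simpa using hA)
  -- sum of numerators over all sets is 1
  have hnumtot : ∑ C ∈ (univ : Finset (Finset X)), num C = 1 := by
    rw [hnum]
    rw [Finset.sum_fiberwise_of_maps_to
      (fun p _ => mem_univ (p.1 ∩ p.2))
      (fun p : Finset X × Finset X => m1 p.1 * m2 p.2)]
    rw [Fintype.sum_prod_type, ← Finset.sum_mul_sum, hsum1, hsum2, one_mul]
  have hnumempty : num ∅ = conflictK m1 m2 := rfl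
  -- total combined mass is 1
  have hdtot : ∑ C ∈ (univ : Finset (Finset X)), dempster m1 m2 C = 1 := by
    have hmem : (∅ : Finset X) ∈ (univ : Finset (Finset X)) := mem_univ _
    rw [← Finset.add_sum_erase _ _ hmem]
    have hd0 : dempster m1 m2 (∅ : Finset X) = 0 := by rw [dempster]; simp
    rw [hd0, zero_add]
    have : ∀ C ∈ (univ : Finset (Finset X)).erase ∅,
        dempster m1 m2 C = num C / (1 - conflictK m1 m2) := by
      intro C hC
      rw [dempster, if_neg (Finset.ne_of_mem_erase hC)]
    rw [Finset.sum_congr rfl this, ← Finset.sum_div]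
    have herase : ∑ C ∈ (univ : Finset (Finset X)).erase ∅, num C
        = 1 - conflictK m1 m2 := by
      have := Finset.add_sum_erase (univ : Finset (Finset X)) num hmem
      rw [hnumtot] at this
      rw [hnumempty] at this
      linarith
    rw [herase, div_self hk']
  refine ⟨ω, hωmem, hpos, ?_, ?_⟩
  · -- Pl of the combination at {ω} is 0
    refine Finset.sum_eq_zero fun B hB => ?_
    obtain ⟨x, hx⟩ := (mem_filter.mp hB).2
    rw [mem_inter, mem_singleton] at hx
    exact hdzero B (hx.2 ▸ hx.1)
  · -- Bel of the complement is 1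
    rw [Bel, ← hdtot]
    refine Finset.sum_subset (subset_univ _) fun B _ hB => ?_
    rw [mem_filter] at hB
    push_neg at hB
    by_cases hBe : B = ∅
    · rw [hBe, dempster]; simp
    · have hBS := hB (mem_univ B) (Finset.nonempty_iff_ne_empty.mpr hBe)
      obtain ⟨x, hxB, hxS⟩ := Finset.not_subset.mp hBS
      rw [mem_sdiff, not_and_or, mem_singleton, not_not] at hxS
      rw [dempster, if_neg hBe]
      have : num B = 0 := by
        refine Finset.sum_eq_zero fun p hp => ?_
        by_contra hne
        obtain ⟨h1p, h2p⟩ := hprodpos p hne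
        have hC : p.1 ∩ p.2 = B := (mem_filter.mp hp).2
        have hx1 : x ∈ p.1 := (mem_inter.mp (hC ▸ hxB)).1
        rcases hxS with h | h
        · have hsub : p.1 ⊆ Θ1 := by
            by_contra hn
            exact absurd (h1.2.2.1 p.1 hn) (ne_of_gt h1p)
          exact h (mem_union_left _ (hsub hx1))
        · exact hkey p.1 p.2 h1p h2p (hC ▸ (h ▸ hxB))
      rw [show (∑ p ∈ univ.filter
        (fun p : Finset X × Finset X => p.1 ∩ p.2 = B), m1 p.1 * m2 p.2)
        = num B from rfl, this, zero_div]
end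

section
/- Let m1 and m2 be mass functions on frames Θ1 and Θ2 with Υ(m1,m2) ≠ ∅ and k(m1,m2) < 1, and define the consensus set U_cons = (Θ1* ∪ Θ2*) \ Υ(m1,m2), where Θi* is the effective frame of m_i. Then every focal element of m1 ⊕ m2 is contained in U_cons, so Bel_{m1⊕m2}(U_cons) = 1 and Pl_{m1⊕m2}(U_cons) = 1; moreover, for every mass function m3 such that k(m1⊕m2, m3) < 1, one has Pl_{(m1⊕m2)⊕m3}(U_cons) = 1. (Assertion of Closure.) -/
open Finset
open scoped Classical

variable {X : Type*} [Fintype X] [DecidableEq X]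

section Aux
variable {X : Type*} [Fintype X] [DecidableEq X]

lemma sum_univ_of_mass {Θ : Finset X} {m : Finset X → ℝ} (h : IsMass Θ m) :
    ∑ A : Finset X, m A = 1 := by
  rw [← h.2.2.2]
  symm
  refine Finset.sum_subset (Finset.subset_univ _) ?_
  intro A _ hA
  exact h.2.2.1 A (by simpa [Finset.mem_powerset] using hA)

lemma dempster_nonneg {m1 m2 : Finset X → ℝ} (hn1 : ∀ A, 0 ≤ m1 A)
    (hn2 : ∀ A, 0 ≤ m2 A) (hk : conflictK m1 m2 < 1) (C : Finset X) :
    0 ≤ dempster m1 m2 C := by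
  unfold dempster
  split
  · exact le_refl 0
  · apply div_nonneg
    · exact Finset.sum_nonneg fun p _ => mul_nonneg (hn1 _) (hn2 _)
    · linarith

lemma dempster_focal {m1 m2 : Finset X → ℝ} (hn1 : ∀ A, 0 ≤ m1 A)
    (hn2 : ∀ A, 0 ≤ m2 A) {C : Finset X} (hC : Focal (dempster m1 m2) C) :
    C ≠ ∅ ∧ ∃ A B, Focal m1 A ∧ Focal m2 B ∧ A ∩ B = C := by
  unfold Focal dempster at hC
  by_cases hCe : C = ∅
  · simp [hCe] at hC
  · rw [if_neg hCe] at hC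
    refine ⟨hCe, ?_⟩
    have hS : (∑ p ∈ univ.filter (fun p : Finset X × Finset X => p.1 ∩ p.2 = C),
        m1 p.1 * m2 p.2) ≠ 0 := by
      intro h
      rw [h, zero_div] at hC
      exact lt_irrefl 0 hC
    obtain ⟨p, hp, hne⟩ := Finset.exists_ne_zero_of_sum_ne_zero hS
    have h1 : m1 p.1 ≠ 0 := fun h => hne (by rw [h, zero_mul])
    have h2 : m2 p.2 ≠ 0 := fun h => hne (by rw [h, mul_zero])
    exact ⟨p.1, p.2, lt_of_le_of_ne (hn1 _) (Ne.symm h1),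
      lt_of_le_of_ne (hn2 _) (Ne.symm h2), (Finset.mem_filter.mp hp).2⟩

lemma dempster_sum {m1 m2 : Finset X → ℝ}
    (hs1 : ∑ A : Finset X, m1 A = 1) (hs2 : ∑ A : Finset X, m2 A = 1)
    (hk : conflictK m1 m2 < 1) :
    ∑ C : Finset X, dempster m1 m2 C = 1 := by
  set S : Finset X → ℝ := fun C =>
    ∑ p ∈ univ.filter (fun p : Finset X × Finset X => p.1 ∩ p.2 = C),
      m1 p.1 * m2 p.2 with hSdef
  have htot : ∑ C : Finset X, S C = 1 := by
    rw [hSdef]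
    rw [Finset.sum_fiberwise univ (fun p : Finset X × Finset X => p.1 ∩ p.2)
      (fun p => m1 p.1 * m2 p.2)]
    rw [Fintype.sum_prod_type]
    simp only [← Finset.mul_sum]
    rw [← Finset.sum_mul, hs1, hs2, one_mul]
  have hSe : S ∅ = conflictK m1 m2 := rfl
  have hsplit : ∑ C ∈ (univ : Finset (Finset X)).erase ∅, S C = 1 - conflictK m1 m2 := by
    have := Finset.sum_erase_add (univ : Finset (Finset X)) S (Finset.mem_univ ∅)
    rw [htot] at this
    linarith [hSe ▸ this]
  calc ∑ C : Finset X, dempster m1 m2 C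
      = ∑ C ∈ (univ : Finset (Finset X)).erase ∅, dempster m1 m2 C
        + dempster m1 m2 ∅ :=
        (Finset.sum_erase_add _ _ (Finset.mem_univ ∅)).symm
    _ = ∑ C ∈ (univ : Finset (Finset X)).erase ∅, S C / (1 - conflictK m1 m2) := by
        rw [show dempster m1 m2 ∅ = 0 from if_pos rfl, add_zero]
        refine Finset.sum_congr rfl ?_
        intro C hC
        exact if_neg (Finset.ne_of_mem_erase hC)
    _ = (∑ C ∈ (univ : Finset (Finset X)).erase ∅, S C) / (1 - conflictK m1 m2) := by
        rw [Finset.sum_div]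
    _ = 1 := by rw [hsplit]; exact div_self (by linarith)

lemma pl_eq_one {m : Finset X → ℝ} (hnn : ∀ A, 0 ≤ m A) (h0 : m ∅ = 0)
    (hsum : ∑ A : Finset X, m A = 1) {U : Finset X}
    (hfoc : ∀ C, Focal m C → C ⊆ U) : Pl m U = 1 := by
  rw [Pl, Finset.sum_filter_of_ne, hsum]
  intro B _ hB
  have hf : Focal m B := lt_of_le_of_ne (hnn B) (Ne.symm hB)
  have hne : B ≠ ∅ := by rintro rfl; exact hB h0
  rw [Finset.inter_eq_left.mpr (hfoc B hf)]
  exact Finset.nonempty_iff_ne_empty.mpr hne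

lemma bel_eq_one {m : Finset X → ℝ} (hnn : ∀ A, 0 ≤ m A) (h0 : m ∅ = 0)
    (hsum : ∑ A : Finset X, m A = 1) {U : Finset X}
    (hfoc : ∀ C, Focal m C → C ⊆ U) : Bel m U = 1 := by
  rw [Bel, Finset.sum_filter_of_ne, hsum]
  intro B _ hB
  have hf : Focal m B := lt_of_le_of_ne (hnn B) (Ne.symm hB)
  exact ⟨by rintro rfl; exact hB h0, hfoc B hf⟩

end Aux

/-- Assertion of Closure. -/
theorem assertion_of_closure
    (Θ1 Θ2 : Finset X) (m1 m2 : Finset X → ℝ)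
    (h1 : IsMass Θ1 m1) (h2 : IsMass Θ2 m2)
    (hopen : (essConflict Θ1 Θ2 m1 m2).Nonempty)
    (hk : conflictK m1 m2 < 1) :
    (∀ C, Focal (dempster m1 m2) C →
        C ⊆ (effFrame m1 ∪ effFrame m2) \ essConflict Θ1 Θ2 m1 m2) ∧
    Bel (dempster m1 m2) ((effFrame m1 ∪ effFrame m2) \ essConflict Θ1 Θ2 m1 m2) = 1 ∧
    Pl (dempster m1 m2) ((effFrame m1 ∪ effFrame m2) \ essConflict Θ1 Θ2 m1 m2) = 1 ∧
    (∀ (Θ3 : Finset X) (m3 : Finset X → ℝ), IsMass Θ3 m3 →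
      conflictK (dempster m1 m2) m3 < 1 →
      Pl (dempster (dempster m1 m2) m3)
        ((effFrame m1 ∪ effFrame m2) \ essConflict Θ1 Θ2 m1 m2) = 1) := by
  have hn1 := h1.1
  have hn2 := h2.1
  have hs1 := sum_univ_of_mass h1
  have hs2 := sum_univ_of_mass h2
  set U := (effFrame m1 ∪ effFrame m2) \ essConflict Θ1 Θ2 m1 m2 with hU
  have hsub : ∀ C, Focal (dempster m1 m2) C → C ⊆ U := by
    intro C hC
    obtain ⟨hCne, A, B, hA, hB, hAB⟩ := dempster_focal hn1 hn2 hC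
    intro ω hω
    rw [hU, Finset.mem_sdiff]
    have hωA : ω ∈ A := Finset.mem_of_mem_inter_left (hAB ▸ hω)
    have hωB : ω ∈ B := Finset.mem_of_mem_inter_right (hAB ▸ hω)
    constructor
    · exact Finset.mem_union_left _ (Finset.mem_filter.mpr ⟨Finset.mem_univ _, A, hA, hωA⟩)
    · intro hmem
      rcases (Finset.mem_filter.mp hmem).2 with ⟨A', hA', hωA', hdisj⟩ | ⟨B', hB', hωB', hdisj⟩
      · have := hdisj B hB
        have : ω ∈ A' ∩ B := Finset.mem_inter.mpr ⟨hωA', hωB⟩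
        simp [hdisj B hB] at this
      · have : ω ∈ B' ∩ A := Finset.mem_inter.mpr ⟨hωB', hωA⟩
        simp [hdisj A hA] at this
  have hdn := dempster_nonneg hn1 hn2 hk
  have hd0 : dempster m1 m2 ∅ = 0 := if_pos rfl
  have hds := dempster_sum hs1 hs2 hk
  refine ⟨hsub, bel_eq_one hdn hd0 hds hsub, pl_eq_one hdn hd0 hds hsub, ?_⟩
  intro Θ3 m3 h3 hk3
  refine pl_eq_one (dempster_nonneg hdn h3.1 hk3) (if_pos rfl)
    (dempster_sum hds (sum_univ_of_mass h3) hk3) ?_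
  intro C hC
  obtain ⟨hCne, A, B, hA, hB, hAB⟩ := dempster_focal hdn h3.1 hC
  exact (hAB ▸ Finset.inter_subset_left).trans (hsub A hA)
end

section
/- Let m be a mass function and S a set with Bel_m(S) = 1 (equivalently, every focal element of m is contained in S). Then for every mass function m3 with k(m, m3) < 1, the Dempster combination satisfies Bel_{m⊕m3}(S) = 1 and Pl_{m⊕m3}(S) = 1; that is, total belief in S is invariant under further combination with any new evidence. -/
open Finset
open scoped Classical

variable {X : Type*} [Fintype X] [DecidableEq X]

/-- Full sum of a mass function over all subsets is 1. -/
lemma sum_univ_eq_one {Θ : Finset X} {m : Finset X → ℝ} (hm : IsMass Θ m) :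
    ∑ A : Finset X, m A = 1 := by
  rw [← hm.2.2.2]
  refine (Finset.sum_subset (Finset.subset_univ _) ?_).symm
  intro A _ hA
  exact hm.2.2.1 A (by simpa [Finset.mem_powerset] using hA)

lemma focal_subset {Θ : Finset X} {m : Finset X → ℝ} (hm : IsMass Θ m)
    {S : Finset X} (hS : Bel m S = 1) {A : Finset X} (hA : m A ≠ 0) :
    A ≠ ∅ ∧ A ⊆ S := by
  by_contra h
  have hmem : A ∈ (univ : Finset (Finset X)).filter
      (fun B : Finset X => ¬ (B ≠ ∅ ∧ B ⊆ S)) := by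
    simp only [Finset.mem_filter, Finset.mem_univ, true_and]
    exact h
  have hsplit : ∑ B ∈ (univ : Finset (Finset X)).filter
        (fun B : Finset X => B ≠ ∅ ∧ B ⊆ S), m B
      + ∑ B ∈ (univ : Finset (Finset X)).filter
        (fun B : Finset X => ¬ (B ≠ ∅ ∧ B ⊆ S)), m B = ∑ A : Finset X, m A :=
    Finset.sum_filter_add_sum_filter_not _ _ _
  rw [sum_univ_eq_one hm] at hsplit
  have hBel : Bel m S = ∑ B ∈ (univ : Finset (Finset X)).filter
      (fun B : Finset X => B ≠ ∅ ∧ B ⊆ S), m B := rfl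
  have hzero : ∑ B ∈ (univ : Finset (Finset X)).filter
      (fun B : Finset X => ¬ (B ≠ ∅ ∧ B ⊆ S)), m B = 0 := by
    rw [hBel] at hS; linarith
  have := (Finset.sum_eq_zero_iff_of_nonneg (fun B _ => hm.1 B)).mp hzero A hmem
  exact hA this

/-- total belief in a set is invariant under further
Dempster combination with any new evidence. -/
theorem total_belief_invariant
    (Θ : Finset X) (m : Finset X → ℝ) (hm : IsMass Θ m)
    (S : Finset X) (hS : Bel m S = 1) :
    ∀ (Θ3 : Finset X) (m3 : Finset X → ℝ), IsMass Θ3 m3 →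
      conflictK m m3 < 1 →
      Bel (dempster m m3) S = 1 ∧ Pl (dempster m m3) S = 1 := by
  intro Θ3 m3 hm3 hk
  have hk' : (1 : ℝ) - conflictK m m3 ≠ 0 := by linarith
  -- support lemma
  have hsupp : ∀ B : Finset X, dempster m m3 B ≠ 0 → B ≠ ∅ ∧ B ⊆ S := by
    intro B hB
    unfold dempster at hB
    by_cases hBe : B = ∅
    · simp [hBe] at hB
    refine ⟨hBe, ?_⟩
    rw [if_neg hBe, div_ne_zero_iff] at hB
    have hsum := hB.1
    obtain ⟨p, hp, hpne⟩ := Finset.exists_ne_zero_of_sum_ne_zero hsum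
    simp only [Finset.mem_filter, Finset.mem_univ, true_and] at hp
    have hm1 : m p.1 ≠ 0 := fun h => hpne (by simp [h])
    have := (focal_subset hm hS hm1).2
    rw [← hp]
    exact (Finset.inter_subset_left).trans this
  -- total sum of dempster = 1
  have htot : ∑ B : Finset X, dempster m m3 B = 1 := by
    have h1 : ∑ B : Finset X, dempster m m3 B
        = ∑ B ∈ (univ : Finset (Finset X)).filter (fun B => B ≠ ∅),
            (∑ p ∈ univ.filter (fun p : Finset X × Finset X => p.1 ∩ p.2 = B),
              m p.1 * m3 p.2) / (1 - conflictK m m3) := by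
      rw [← Finset.sum_filter_add_sum_filter_not (univ : Finset (Finset X))
        (fun B => B ≠ ∅) (dempster m m3)]
      have h2 : ∑ B ∈ (univ : Finset (Finset X)).filter (fun B => ¬ B ≠ ∅),
          dempster m m3 B = 0 := by
        apply Finset.sum_eq_zero
        intro B hB
        simp only [Finset.mem_filter, not_not] at hB
        simp [dempster, hB.2]
      rw [h2, add_zero]
      apply Finset.sum_congr rfl
      intro B hB
      simp only [Finset.mem_filter] at hB
      simp [dempster, hB.2]
    rw [h1, ← Finset.sum_div]
    rw [Finset.sum_fiberwise_eq_sum_filter _ _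
      (fun p : Finset X × Finset X => p.1 ∩ p.2) (fun p => m p.1 * m3 p.2)]
    have hall : ∑ p ∈ (univ : Finset (Finset X × Finset X)).filter
          (fun p => p.1 ∩ p.2 ∈ (univ : Finset (Finset X)).filter (fun B => B ≠ ∅)),
          m p.1 * m3 p.2
        = (∑ p : Finset X × Finset X, m p.1 * m3 p.2) - conflictK m m3 := by
      rw [conflictK, eq_sub_iff_add_eq]
      rw [← Finset.sum_filter_add_sum_filter_not (univ : Finset (Finset X × Finset X))
        (fun p => p.1 ∩ p.2 = ∅) (fun p => m p.1 * m3 p.2)]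
      have hfe : ((univ : Finset (Finset X × Finset X)).filter
          (fun p => p.1 ∩ p.2 ∈ (univ : Finset (Finset X)).filter (fun B => B ≠ ∅)))
          = (univ.filter (fun p : Finset X × Finset X => ¬ p.1 ∩ p.2 = ∅)) := by
        apply Finset.filter_congr
        intro p _
        simp
      rw [hfe, add_comm]
    rw [hall]
    have hprod : ∑ p : Finset X × Finset X, m p.1 * m3 p.2 = 1 := by
      rw [Fintype.sum_prod_type, ← Finset.sum_mul_sum, sum_univ_eq_one hm,
        sum_univ_eq_one hm3, one_mul]
    rw [hprod, div_self hk']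
  constructor
  · rw [Bel, ← htot]
    refine Finset.sum_subset (Finset.filter_subset _ _) ?_
    intro B _ hB
    by_contra h
    exact hB (by simp only [Finset.mem_filter, Finset.mem_univ, true_and]; exact hsupp B h)
  · rw [Pl, ← htot]
    refine Finset.sum_subset (Finset.filter_subset _ _) ?_
    intro B _ hB
    by_contra h
    obtain ⟨hne, hsub⟩ := hsupp B h
    apply hB
    simp only [Finset.mem_filter, Finset.mem_univ, true_and]
    rw [Finset.inter_eq_left.mpr hsub]
    exact Finset.nonempty_iff_ne_empty.mpr hne
end

section
/- Let m1 and m2 be mass functions on frames Θ1 and Θ2 with k(m1,m2) < 1. Then for every element ω, the plausibility of the singleton {ω} under the Dempster combination satisfies Pl_{m1⊕m2}({ω}) = Pl_{m1}({ω}) · Pl_{m2}({ω}) / (1 − k(m1,m2)). -/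
open Finset
open scoped Classical

variable {X : Type*} [Fintype X] [DecidableEq X]

/-- plausibility of singletons is multiplicative (up to the
normalization) under Dempster combination. -/
theorem pl_singleton_dempster
    (Θ1 Θ2 : Finset X) (m1 m2 : Finset X → ℝ)
    (h1 : IsMass Θ1 m1) (h2 : IsMass Θ2 m2)
    (hk : conflictK m1 m2 < 1) :
    ∀ ω : X, Pl (dempster m1 m2) {ω} =
      Pl m1 {ω} * Pl m2 {ω} / (1 - conflictK m1 m2) := by
  intro ω
  have hk' : (1 : ℝ) - conflictK m1 m2 ≠ 0 := by linarith
  have e1 : Pl (dempster m1 m2) {ω}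
      = ∑ C ∈ univ.filter (fun C : Finset X => ω ∈ C),
          (∑ p ∈ univ.filter (fun p : Finset X × Finset X => p.1 ∩ p.2 = C),
            m1 p.1 * m2 p.2) / (1 - conflictK m1 m2) := by
    unfold Pl
    refine Finset.sum_congr ?_ ?_
    · ext C
      simp [Finset.Nonempty, Finset.mem_inter]
    · intro C hC
      simp only [Finset.mem_filter] at hC
      unfold dempster
      rw [if_neg (by rintro rfl; exact absurd hC.2 (by simp))]
  rw [e1, ← Finset.sum_div]
  congr 1
  rw [Finset.sum_fiberwise_eq_sum_filter]
  unfold Pl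
  rw [Finset.sum_mul_sum, ← Finset.sum_product']
  refine Finset.sum_congr ?_ (fun _ _ => rfl)
  ext p
  simp [Finset.Nonempty, Finset.mem_inter, and_assoc]
end

section
/- Let m1 and m2 be mass functions on frames Θ1 and Θ2 such that Υ(m1,m2) = Θ1 ∪ Θ2 (the essential conflict set is the entire combined frame). Then every focal element of m1 is disjoint from every focal element of m2, and consequently k(m1,m2) = 1, so Dempster's combination rule is undefined (the normalization denominator is zero). -/
open Finset
open scoped Classical

variable {X : Type*} [Fintype X] [DecidableEq X]

/-- if the essential conflict set is the entire combined frame,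
then all pairs of focal elements are disjoint and `k(m1, m2) = 1`. -/
theorem total_essential_conflict
    (Θ1 Θ2 : Finset X) (m1 m2 : Finset X → ℝ)
    (h1 : IsMass Θ1 m1) (h2 : IsMass Θ2 m2)
    (hfull : essConflict Θ1 Θ2 m1 m2 = Θ1 ∪ Θ2) :
    (∀ A B, Focal m1 A → Focal m2 B → A ∩ B = ∅) ∧
    conflictK m1 m2 = 1 := by
  obtain ⟨h1n, h1e, h1s, h1sum⟩ := h1
  obtain ⟨h2n, h2e, h2s, h2sum⟩ := h2
  have hdisj : ∀ A B, Focal m1 A → Focal m2 B → A ∩ B = ∅ := by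
    intro A B hA hB
    by_contra hne
    obtain ⟨ω, hω⟩ := Finset.nonempty_iff_ne_empty.mpr hne
    have hωA : ω ∈ A := (Finset.mem_inter.mp hω).1
    have hωB : ω ∈ B := (Finset.mem_inter.mp hω).2
    have hAΘ : A ⊆ Θ1 := by
      by_contra hc; exact absurd (h1s A hc) (ne_of_gt hA)
    have hωU : ω ∈ Θ1 ∪ Θ2 := Finset.mem_union_left _ (hAΘ hωA)
    have : ω ∈ essConflict Θ1 Θ2 m1 m2 := hfull ▸ hωU
    rw [essConflict, Finset.mem_filter] at this
    rcases this.2 with ⟨A', hA', hωA', hAll⟩ | ⟨B', hB', hωB', hAll⟩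
    · have := hAll B hB
      have : ω ∈ (∅ : Finset X) := this ▸ Finset.mem_inter.mpr ⟨hωA', hωB⟩
      exact absurd this (Finset.notMem_empty ω)
    · have := hAll A hA
      have : ω ∈ (∅ : Finset X) := this ▸ Finset.mem_inter.mpr ⟨hωB', hωA⟩
      exact absurd this (Finset.notMem_empty ω)
  refine ⟨hdisj, ?_⟩
  have hsum1 : ∑ A : Finset X, m1 A = 1 := by
    rw [← h1sum]
    refine (Finset.sum_subset (Finset.subset_univ _) ?_).symm
    intro A _ hA
    exact h1s A (by simpa [Finset.mem_powerset] using hA)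
  have hsum2 : ∑ B : Finset X, m2 B = 1 := by
    rw [← h2sum]
    refine (Finset.sum_subset (Finset.subset_univ _) ?_).symm
    intro A _ hA
    exact h2s A (by simpa [Finset.mem_powerset] using hA)
  have hfull' : conflictK m1 m2 = ∑ p : Finset X × Finset X, m1 p.1 * m2 p.2 := by
    rw [conflictK]
    refine Finset.sum_subset (Finset.filter_subset _ _) ?_
    intro p _ hp
    simp only [Finset.mem_filter, Finset.mem_univ, true_and] at hp
    rcases le_iff_lt_or_eq.mp (h1n p.1) with h | h
    · rcases le_iff_lt_or_eq.mp (h2n p.2) with h' | h'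
      · exact absurd (hdisj p.1 p.2 h h') hp
      · rw [← h', mul_zero]
    · rw [← h, zero_mul]
  rw [hfull', Fintype.sum_prod_type]
  calc ∑ A : Finset X, ∑ B : Finset X, m1 A * m2 B
      = ∑ A : Finset X, m1 A * ∑ B : Finset X, m2 B := by
        simp [Finset.mul_sum]
    _ = 1 := by simp [hsum1, hsum2]
end

section
/- Let m be a mass function with effective frame Θ*, let Ω be a finite set with Θ* ⊆ Ω, and let m' be the function defined on finite subsets of Ω by m'(B) = Σ_{A ⊆ Θ* : A ∪ (Ω \ Θ*) = B} m(A). Then m' is a valid mass function on the frame Ω: m'(∅) = 0, m'(B) = 0 whenever B is not a subset of Ω, and Σ_{B ⊆ Ω} m'(B) = 1. (Mass Function Invariance.) -/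
open Finset
open scoped Classical

variable {X : Type*} [Fintype X] [DecidableEq X]

/-- Mass Function Invariance: the FNBT transform of a mass
function is a valid mass function on the extended frame `Ω`. -/
theorem fnbt_mass_invariance
    (Θ : Finset X) (m : Finset X → ℝ) (hm : IsMass Θ m)
    (Ω : Finset X) (hΩ : effFrame m ⊆ Ω) :
    IsMass Ω (fnbt m Ω) := by
  obtain ⟨hnn, h0, hsub, hsum⟩ := hm
  have hzero : ∀ A : Finset X, ¬ A ⊆ effFrame m → m A = 0 := by
    intro A hA
    by_contra h
    have hf : Focal m A := lt_of_le_of_ne (hnn A) (Ne.symm h)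
    exact hA (fun ω hω => by simp [effFrame]; exact ⟨A, hf, hω⟩)
  refine ⟨?_, ?_, ?_, ?_⟩
  · intro A
    exact Finset.sum_nonneg (fun A _ => hnn A)
  · unfold fnbt
    apply Finset.sum_eq_zero
    intro A hA
    simp only [Finset.mem_filter, Finset.mem_powerset, Finset.union_eq_empty] at hA
    rw [hA.2.1, h0]
  · intro B hB
    unfold fnbt
    apply Finset.sum_eq_zero
    intro A hA
    simp only [Finset.mem_filter, Finset.mem_powerset] at hA
    exact absurd (hA.2 ▸ Finset.union_subset (hA.1.trans hΩ) (Finset.sdiff_subset)) hB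
  · unfold fnbt
    rw [Finset.sum_fiberwise_of_maps_to (g := fun A => A ∪ (Ω \ effFrame m))]
    · have h1 : ∑ A ∈ (effFrame m).powerset, m A = ∑ A ∈ Θ.powerset, m A := by
        apply Finset.sum_subset
        · exact Finset.powerset_mono.2 (fun ω hω => by
            simp only [effFrame, Finset.mem_filter] at hω
            obtain ⟨-, A, hf, hωA⟩ := hω
            by_contra hΘ
            exact hΘ (by
              by_contra h'
              exact absurd (hsub A (fun hAΘ => h' (hAΘ hωA))) (ne_of_gt hf)))
        · intro A _ hA
          exact hzero A (by simpa using hA)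
      rw [h1, hsum]
    · intro A hA
      simp only [Finset.mem_powerset] at hA ⊢
      exact Finset.union_subset (hA.trans hΩ) Finset.sdiff_subset
end

section
/- Let m be a mass function with effective frame Θ*, let Ω be a finite set with Θ* ⊆ Ω, and let m' be the FNBT transform of m on Ω. Then for every ω ∈ Θ*, Pl_{m'}({ω}) = Pl_m({ω}), and for every ω ∈ Ω \ Θ*, Pl_{m'}({ω}) = 1; that is, the full negation transformation preserves the plausibility of elements of the effective frame and assigns maximal plausibility to all newly introduced elements. -/
open Finset
open scoped Classical

variable {X : Type*} [Fintype X] [DecidableEq X]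

/-- FNBT preserves the plausibility of elements of the effective
frame and assigns maximal plausibility to all newly introduced elements. -/
theorem fnbt_plausibility
    (Θ : Finset X) (m : Finset X → ℝ) (hm : IsMass Θ m)
    (Ω : Finset X) (hΩ : effFrame m ⊆ Ω) :
    (∀ ω ∈ effFrame m, Pl (fnbt m Ω) {ω} = Pl m {ω}) ∧
    (∀ ω ∈ Ω \ effFrame m, Pl (fnbt m Ω) {ω} = 1) := by
  obtain ⟨hnn, hempty, hsub, hsum⟩ := hm
  have hzero : ∀ A : Finset X, ¬ A ⊆ effFrame m → m A = 0 := by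
    intro A hA
    by_contra h
    exact hA fun x hx => mem_filter.2 ⟨mem_univ x, A, lt_of_le_of_ne (hnn A) (Ne.symm h), hx⟩
  have key : ∀ ω : X, Pl (fnbt m Ω) {ω}
      = ∑ A ∈ (effFrame m).powerset,
          (if ω ∈ A ∪ (Ω \ effFrame m) then m A else 0) := by
    intro ω
    unfold Pl fnbt
    rw [Finset.sum_filter]
    rw [← Finset.sum_fiberwise_of_maps_to
      (g := fun A : Finset X => A ∪ (Ω \ effFrame m)) (t := (univ : Finset (Finset X)))
      (fun A _ => mem_univ _) (fun A => if ω ∈ A ∪ (Ω \ effFrame m) then m A else 0)]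
    refine Finset.sum_congr rfl fun B _ => ?_
    split_ifs with h
    · refine Finset.sum_congr rfl fun A hA => ?_
      rw [mem_filter] at hA
      rw [if_pos]
      obtain ⟨x, hx⟩ := h
      rw [mem_inter, mem_singleton] at hx
      rw [hA.2]
      exact hx.2 ▸ hx.1
    · symm
      refine Finset.sum_eq_zero fun A hA => ?_
      rw [mem_filter] at hA
      rw [if_neg]
      intro hc
      exact h ⟨ω, mem_inter.2 ⟨hA.2 ▸ hc, mem_singleton_self ω⟩⟩
  constructor
  · intro ω hω
    rw [key ω]
    have hnot : ω ∉ Ω \ effFrame m := fun h => (mem_sdiff.1 h).2 hω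
    have h1 : ∀ A ∈ (effFrame m).powerset,
        (if ω ∈ A ∪ (Ω \ effFrame m) then m A else 0) = (if ω ∈ A then m A else 0) := by
      intro A _
      congr 1
      simp only [mem_union, eq_iff_iff]
      exact ⟨fun h => h.resolve_right fun hc => hnot hc, Or.inl⟩
    rw [Finset.sum_congr rfl h1, ← Finset.sum_filter]
    unfold Pl
    apply Finset.sum_subset
    · intro A hA
      rw [mem_filter, mem_powerset] at hA
      rw [mem_filter]
      exact ⟨mem_univ A, ⟨ω, mem_inter.2 ⟨hA.2, mem_singleton_self ω⟩⟩⟩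
    · intro A hAt hAs
      by_contra h
      apply hAs
      rw [mem_filter, mem_powerset]
      rw [mem_filter] at hAt
      obtain ⟨x, hx⟩ := hAt.2
      rw [mem_inter, mem_singleton] at hx
      have hωA : ω ∈ A := hx.2 ▸ hx.1
      have hAe : A ⊆ effFrame m := by
        by_contra hc
        exact h (hzero A hc)
      exact ⟨hAe, hωA⟩
  · intro ω hω
    rw [key ω]
    have h1 : ∀ A ∈ (effFrame m).powerset,
        (if ω ∈ A ∪ (Ω \ effFrame m) then m A else 0) = m A := by
      intro A _
      rw [if_pos (mem_union.2 (Or.inr hω))]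
    rw [Finset.sum_congr rfl h1]
    have e1 : ∑ A ∈ (effFrame m).powerset, m A = ∑ A ∈ (univ : Finset (Finset X)), m A :=
      Finset.sum_subset (subset_univ _) fun A _ hA => hzero A fun h => hA (mem_powerset.2 h)
    have e2 : ∑ A ∈ Θ.powerset, m A = ∑ A ∈ (univ : Finset (Finset X)), m A :=
      Finset.sum_subset (subset_univ _) fun A _ hA => hsub A fun h => hA (mem_powerset.2 h)
    rw [e1, ← e2, hsum]
end

section
/- Let m be a mass function with effective frame Θ*, let Ω be a finite set with Θ* ⊆ Ω and Ω ≠ Θ*, and let m' be the FNBT transform of m on Ω. Then for every set B ⊆ Ω: if Ω \ Θ* ⊆ B then Bel_{m'}(B) = Bel_m(B ∩ Θ*), and if Ω \ Θ* is not a subset of B then Bel_{m'}(B) = 0. -/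
open Finset
open scoped Classical

variable {X : Type*} [Fintype X] [DecidableEq X]

/-- belief under the FNBT transform. -/
theorem fnbt_belief
    (Θ : Finset X) (m : Finset X → ℝ) (hm : IsMass Θ m)
    (Ω : Finset X) (hΩ : effFrame m ⊆ Ω) (hne : Ω ≠ effFrame m) :
    ∀ B ⊆ Ω,
      (Ω \ effFrame m ⊆ B → Bel (fnbt m Ω) B = Bel m (B ∩ effFrame m)) ∧
      (¬ Ω \ effFrame m ⊆ B → Bel (fnbt m Ω) B = 0) := by
  intro B hB
  set D := Ω \ effFrame m with hD
  have hDne : D.Nonempty := by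
    rw [hD, Finset.sdiff_nonempty]
    intro h
    exact hne (le_antisymm h hΩ)
  have key : Bel (fnbt m Ω) B =
      ∑ A ∈ (effFrame m).powerset.filter (fun A => (A ∪ D ≠ ∅ ∧ A ∪ D ⊆ B)), m A := by
    unfold Bel fnbt
    rw [Finset.sum_fiberwise_eq_sum_filter _ _ (fun A => A ∪ D)]
    apply Finset.sum_congr
    · ext A
      simp
    · intro _ _; rfl
  refine ⟨fun hsub => ?_, fun hnsub => ?_⟩
  · rw [key]
    have hset : (effFrame m).powerset.filter (fun A => (A ∪ D ≠ ∅ ∧ A ∪ D ⊆ B)) =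
        univ.filter (fun A => A ⊆ B ∩ effFrame m) := by
      ext A
      simp only [Finset.mem_filter, Finset.mem_powerset, Finset.mem_univ, true_and,
        Finset.subset_inter_iff, Finset.union_subset_iff]
      constructor
      · rintro ⟨hAΘ, _, hAB, _⟩; exact ⟨hAB, hAΘ⟩
      · rintro ⟨hAB, hAΘ⟩
        refine ⟨hAΘ, ?_, hAB, hsub⟩
        intro h
        exact hDne.ne_empty (Finset.union_eq_empty.mp h).2
    rw [hset]
    unfold Bel
    rw [eq_comm]
    apply Finset.sum_subset
    · intro A hA
      simp only [Finset.mem_filter, Finset.mem_univ, true_and] at hA ⊢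
      exact hA.2
    · intro A hA hA'
      simp only [Finset.mem_filter, Finset.mem_univ, true_and, not_and] at hA hA'
      have : A = ∅ := by
        by_contra h
        exact (hA' h) hA
      rw [this]; exact hm.2.1
  · rw [key]
    apply Finset.sum_eq_zero
    intro A hA
    exfalso
    simp only [Finset.mem_filter, Finset.union_subset_iff] at hA
    exact hnsub hA.2.2.2
end

section
/- Let m1 and m2 be mass functions on frames Θ1 and Θ2 with effective frames Θ1*, Θ2* and extended effective frame Ω = Θ1* ∪ Θ2*, and suppose the intersection Θ1* ∩ Θ2* contains at most one element. Then for every focal element A' of the FNBT transform m1' and every focal element B' of the FNBT transform m2', A' ∩ B' ≠ ∅; in particular, k(m1', m2') = 0. -/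
open Finset
open scoped Classical

variable {X : Type*} [Fintype X] [DecidableEq X]

lemma fnbt_nonneg {X : Type*} [Fintype X] [DecidableEq X]
    {Θ : Finset X} {m : Finset X → ℝ} (h : IsMass Θ m) (Ω B : Finset X) :
    0 ≤ fnbt m Ω B :=
  Finset.sum_nonneg fun A _ => h.1 A

lemma focal_fnbt {X : Type*} [Fintype X] [DecidableEq X]
    {Θ : Finset X} {m : Finset X → ℝ} (h : IsMass Θ m) {Ω B : Finset X}
    (hB : Focal (fnbt m Ω) B) :
    ∃ A, 0 < m A ∧ A.Nonempty ∧ A ⊆ effFrame m ∧ A ∪ (Ω \ effFrame m) = B := by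
  by_contra hcon
  push_neg at hcon
  have : fnbt m Ω B ≤ 0 := by
    apply Finset.sum_nonpos
    intro A hA
    simp only [Finset.mem_filter, Finset.mem_powerset] at hA
    by_contra hpos
    push_neg at hpos
    have hpos' : 0 < m A := lt_of_le_of_ne (h.1 A) (by
      intro he; exact absurd he.symm (ne_of_gt hpos))
    have hne : A.Nonempty := by
      rcases A.eq_empty_or_nonempty with rfl | hne
      · exact absurd h.2.1 (ne_of_gt hpos')
      · exact hne
    exact absurd hA.2 (hcon A hpos' hne hA.1)
  exact absurd this (not_le.mpr hB)

/-- if the effective frames intersect in at most one element,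
the FNBT transforms have pairwise intersecting focal elements and a vanishing
conflict coefficient. -/
theorem fnbt_small_intersection
    (Θ1 Θ2 : Finset X) (m1 m2 : Finset X → ℝ)
    (h1 : IsMass Θ1 m1) (h2 : IsMass Θ2 m2)
    (hcard : (effFrame m1 ∩ effFrame m2).card ≤ 1) :
    (∀ A' B', Focal (fnbt m1 (effFrame m1 ∪ effFrame m2)) A' →
      Focal (fnbt m2 (effFrame m1 ∪ effFrame m2)) B' →
      A' ∩ B' ≠ ∅) ∧
    conflictK (fnbt m1 (effFrame m1 ∪ effFrame m2))
        (fnbt m2 (effFrame m1 ∪ effFrame m2)) = 0 := by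
  set E1 := effFrame m1 with hE1
  set E2 := effFrame m2 with hE2
  set Ω := E1 ∪ E2 with hΩ
  have key : ∀ A' B', Focal (fnbt m1 Ω) A' → Focal (fnbt m2 Ω) B' → A' ∩ B' ≠ ∅ := by
    intro A' B' hA' hB'
    obtain ⟨A, hmA, hAne, hAsub, rfl⟩ := focal_fnbt h1 hA'
    obtain ⟨B, hmB, hBne, hBsub, rfl⟩ := focal_fnbt h2 hB'
    rw [← Finset.nonempty_iff_ne_empty]
    by_cases hA2 : A ⊆ E2
    · by_cases hB1 : B ⊆ E1
      · obtain ⟨a, ha⟩ := hAne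
        obtain ⟨b, hb⟩ := hBne
        have hab : a = b := Finset.card_le_one.mp hcard a
          (Finset.mem_inter.mpr ⟨hAsub ha, hA2 ha⟩) b
          (Finset.mem_inter.mpr ⟨hB1 hb, hBsub hb⟩)
        exact ⟨a, Finset.mem_inter.mpr ⟨Finset.mem_union_left _ ha,
          Finset.mem_union_left _ (hab ▸ hb)⟩⟩
      · obtain ⟨b, hb, hb1⟩ := Finset.not_subset.mp hB1
        refine ⟨b, Finset.mem_inter.mpr ⟨Finset.mem_union_right _ ?_,
          Finset.mem_union_left _ hb⟩⟩
        exact Finset.mem_sdiff.mpr ⟨Finset.mem_union_right _ (hBsub hb), hb1⟩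
    · obtain ⟨a, ha, ha2⟩ := Finset.not_subset.mp hA2
      refine ⟨a, Finset.mem_inter.mpr ⟨Finset.mem_union_left _ ha,
        Finset.mem_union_right _ ?_⟩⟩
      exact Finset.mem_sdiff.mpr ⟨Finset.mem_union_left _ (hAsub ha), ha2⟩
  refine ⟨key, ?_⟩
  rw [conflictK]
  apply Finset.sum_eq_zero
  intro p hp
  simp only [Finset.mem_filter, Finset.mem_univ, true_and] at hp
  rcases (fnbt_nonneg h1 Ω p.1).lt_or_eq with hpos | hz
  · rcases (fnbt_nonneg h2 Ω p.2).lt_or_eq with hpos2 | hz2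
    · exact absurd hp (key p.1 p.2 hpos hpos2)
    · rw [← hz2, mul_zero]
  · rw [← hz, zero_mul]
end
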